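/- arXiv:2511.19297 — 2 statements merged into one kernel-verified Lean document; each statement's English description precedes it below -/
import Mathlib

section
/- The kernel of the wedge map ∧ : Sym²(Λ²(ℝⁿ)) → Λ⁴(ℝⁿ) has dimension (1/12)·n²(n+1)(n−1). -/
/-- The space Λ^{2,2}_0(ℝⁿ) = ker(∧ : Sym²(Λ²(ℝⁿ)) → Λ⁴(ℝⁿ)): symmetric double 2-forms
(4-multilinear forms antisymmetric in the first pair, antisymmetric in the second pair, and
symmetric under swapping the pairs) that lie in the kernel of the wedge map, i.e. whose
(2,2)-shuffle alternation (equivalently, algebraic Bianchi sum) vanishes. -/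
noncomputable def wedgeKernel22 (V : Type*) [AddCommGroup V] [Module ℝ V] :
    Submodule ℝ (MultilinearMap ℝ (fun _ : Fin 4 => V) ℝ) where
  carrier := {T | ∀ x y z w : V,
    T ![y, x, z, w] = -T ![x, y, z, w] ∧
    T ![x, y, w, z] = -T ![x, y, z, w] ∧
    T ![z, w, x, y] = T ![x, y, z, w] ∧
    T ![x, y, z, w] - T ![x, z, y, w] + T ![x, w, y, z]
      + T ![y, z, x, w] - T ![y, w, x, z] + T ![z, w, x, y] = 0}
  add_mem' := by
    intro a b ha hb x y z w
    obtain ⟨h1, h2, h3, h4⟩ := ha x y z w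
    obtain ⟨g1, g2, g3, g4⟩ := hb x y z w
    simp only [MultilinearMap.add_apply]
    exact ⟨by rw [h1, g1]; ring, by rw [h2, g2]; ring, by rw [h3, g3],
      by linear_combination h4 + g4⟩
  zero_mem' := by intro x y z w; simp
  smul_mem' := by
    intro c T hT x y z w
    obtain ⟨h1, h2, h3, h4⟩ := hT x y z w
    simp only [MultilinearMap.smul_apply, smul_eq_mul]
    exact ⟨by rw [h1]; ring, by rw [h2]; ring, by rw [h3],
      by linear_combination c * h4⟩


open MultilinearMap

variable {n : ℕ}

/-- Index-level model of the wedge kernel. -/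
def idxKernel (n : ℕ) : Submodule ℝ ((Fin 4 → Fin n) → ℝ) where
  carrier := {f | ∀ i j k l : Fin n,
    f ![j, i, k, l] = -f ![i, j, k, l] ∧
    f ![i, j, l, k] = -f ![i, j, k, l] ∧
    f ![k, l, i, j] = f ![i, j, k, l] ∧
    f ![i, j, k, l] - f ![i, k, j, l] + f ![i, l, j, k]
      + f ![j, k, i, l] - f ![j, l, i, k] + f ![k, l, i, j] = 0}
  add_mem' := by
    intro a b ha hb i j k l
    obtain ⟨h1, h2, h3, h4⟩ := ha i j k l
    obtain ⟨g1, g2, g3, g4⟩ := hb i j k l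
    refine ⟨?_, ?_, ?_, ?_⟩ <;> simp only [Pi.add_apply] <;> linarith
  zero_mem' := by intro i j k l; simp
  smul_mem' := by
    intro c f hf i j k l
    obtain ⟨h1, h2, h3, h4⟩ := hf i j k l
    simp only [Pi.smul_apply, smul_eq_mul]
    exact ⟨by linear_combination c * h1, by linear_combination c * h2,
      by linear_combination c * h3, by linear_combination c * h4⟩

theorem idxKernel_smul_aux : True := trivial

/-- evaluation of a multilinear map on tuples of basis vectors -/
noncomputable def psiL (n : ℕ) :
    MultilinearMap ℝ (fun _ : Fin 4 => (Fin n → ℝ)) ℝ →ₗ[ℝ] ((Fin 4 → Fin n) → ℝ) where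
  toFun T := fun v => T (fun k => Pi.single (v k) 1)
  map_add' T S := by funext v; simp
  map_smul' c T := by funext v; simp

/-- the elementary multilinear map attached to an index tuple -/
noncomputable def elem (n : ℕ) (v : Fin 4 → Fin n) :
    MultilinearMap ℝ (fun _ : Fin 4 => (Fin n → ℝ)) ℝ :=
  (MultilinearMap.mkPiRing ℝ (Fin 4) (1 : ℝ)).compLinearMap (fun k => LinearMap.proj (v k))

theorem elem_apply (v : Fin 4 → Fin n) (m : Fin 4 → (Fin n → ℝ)) :
    elem n v m = ∏ k, m k (v k) := by
  simp [elem, MultilinearMap.compLinearMap]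

noncomputable def phiL (n : ℕ) :
    ((Fin 4 → Fin n) → ℝ) →ₗ[ℝ] MultilinearMap ℝ (fun _ : Fin 4 => (Fin n → ℝ)) ℝ where
  toFun g := ∑ v : Fin 4 → Fin n, g v • elem n v
  map_add' a b := by simp [add_smul, Finset.sum_add_distrib]
  map_smul' c a := by simp [smul_smul, Finset.smul_sum]

theorem psi_phi (g : (Fin 4 → Fin n) → ℝ) : psiL n (phiL n g) = g := by
  funext v
  have key : ∀ u : Fin 4 → Fin n,
      elem n u (fun k => Pi.single (v k) (1:ℝ)) = if u = v then 1 else 0 := by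
    intro u
    rw [elem_apply]
    by_cases h : u = v
    · subst h; simp
    · rw [if_neg h]
      obtain ⟨k, hk⟩ := Function.ne_iff.mp h
      refine Finset.prod_eq_zero (Finset.mem_univ k) ?_
      rw [Pi.single_apply, if_neg hk]
  simp only [psiL, phiL, LinearMap.coe_mk, AddHom.coe_mk, MultilinearMap.sum_apply,
    MultilinearMap.smul_apply, smul_eq_mul, key]
  simp [Finset.sum_ite_eq']

theorem psiL_injective : Function.Injective (psiL n) := by
  intro T S h
  refine Module.Basis.ext_multilinear (fun _ => Pi.basisFun ℝ (Fin n)) fun v => ?_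
  have := congrFun h v
  simpa [psiL, Pi.basisFun_apply] using this

theorem phi_psi (T : MultilinearMap ℝ (fun _ : Fin 4 => (Fin n → ℝ)) ℝ) :
    phiL n (psiL n T) = T :=
  psiL_injective (psi_phi (psiL n T))

/-- the equivalence between multilinear forms and index functions -/
noncomputable def psiEquiv (n : ℕ) :
    MultilinearMap ℝ (fun _ : Fin 4 => (Fin n → ℝ)) ℝ ≃ₗ[ℝ] ((Fin 4 → Fin n) → ℝ) :=
  LinearEquiv.ofLinear (psiL n) (phiL n)
    (LinearMap.ext psi_phi) (LinearMap.ext phi_psi)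

theorem eta4 {α : Type*} (v : Fin 4 → α) : v = ![v 0, v 1, v 2, v 3] := by
  funext i; fin_cases i <;> rfl

def pe (a b : Fin 4 → Fin 4) (h1 : ∀ i, b (a i) = i) (h2 : ∀ i, a (b i) = i) : Fin 4 ≃ Fin 4 :=
  ⟨a, b, h1, h2⟩

@[simp] theorem pe_apply (a b h1 h2) (i : Fin 4) : pe a b h1 h2 i = a i := rfl

def s01 : Fin 4 ≃ Fin 4 := pe ![1,0,2,3] ![1,0,2,3] (by decide) (by decide)
def s23 : Fin 4 ≃ Fin 4 := pe ![0,1,3,2] ![0,1,3,2] (by decide) (by decide)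
def sw : Fin 4 ≃ Fin 4 := pe ![2,3,0,1] ![2,3,0,1] (by decide) (by decide)
def s2 : Fin 4 ≃ Fin 4 := pe ![0,2,1,3] ![0,2,1,3] (by decide) (by decide)
def s3 : Fin 4 ≃ Fin 4 := pe ![0,3,1,2] ![0,2,3,1] (by decide) (by decide)
def s4 : Fin 4 ≃ Fin 4 := pe ![1,2,0,3] ![2,0,1,3] (by decide) (by decide)
def s5 : Fin 4 ≃ Fin 4 := pe ![1,3,0,2] ![2,0,3,1] (by decide) (by decide)

theorem cond_transfer (T : MultilinearMap ℝ (fun _ : Fin 4 => (Fin n → ℝ)) ℝ)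
    (σ : Fin 4 ≃ Fin 4) (c : ℝ)
    (h : ∀ v : Fin 4 → Fin n, psiL n T (v ∘ σ) = c * psiL n T v) :
    ∀ m : Fin 4 → (Fin n → ℝ), T (m ∘ σ) = c * T m := by
  have claim : T.domDomCongr σ = c • T := by
    refine Module.Basis.ext_multilinear (fun _ => Pi.basisFun ℝ (Fin n)) fun v => ?_
    have := h v
    simp only [psiL, LinearMap.coe_mk, AddHom.coe_mk, Function.comp] at this
    simpa [MultilinearMap.domDomCongr, Pi.basisFun_apply] using this
  intro m
  have := DFunLike.congr_fun claim m
  simpa [MultilinearMap.domDomCongr, Function.comp_def] using this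

theorem bianchi_transfer (T : MultilinearMap ℝ (fun _ : Fin 4 => (Fin n → ℝ)) ℝ)
    (h : ∀ v : Fin 4 → Fin n, psiL n T v - psiL n T (v ∘ s2) + psiL n T (v ∘ s3)
      + psiL n T (v ∘ s4) - psiL n T (v ∘ s5) + psiL n T (v ∘ sw) = 0) :
    ∀ m : Fin 4 → (Fin n → ℝ), T m - T (m ∘ s2) + T (m ∘ s3)
      + T (m ∘ s4) - T (m ∘ s5) + T (m ∘ sw) = 0 := by
  have claim : T + T.domDomCongr s3 + T.domDomCongr s4 + T.domDomCongr sw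
      = T.domDomCongr s2 + T.domDomCongr s5 := by
    refine Module.Basis.ext_multilinear (fun _ => Pi.basisFun ℝ (Fin n)) fun v => ?_
    have := h v
    simp only [psiL, LinearMap.coe_mk, AddHom.coe_mk, Function.comp] at this
    simp only [MultilinearMap.add_apply, MultilinearMap.domDomCongr, coe_mk,
      Pi.basisFun_apply]
    linarith
  intro m
  have := DFunLike.congr_fun claim m
  simp only [MultilinearMap.add_apply, MultilinearMap.domDomCongr, coe_mk,
    Function.comp_def] at this ⊢
  linarith

theorem psi_vec (T : MultilinearMap ℝ (fun _ : Fin 4 => (Fin n → ℝ)) ℝ) (i j k l : Fin n) :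
    psiL n T ![i, j, k, l]
      = T ![Pi.single i 1, Pi.single j 1, Pi.single k 1, Pi.single l 1] := by
  simp only [psiL, LinearMap.coe_mk, AddHom.coe_mk]
  congr 1; funext t; fin_cases t <;> rfl

section comps
variable {α : Type*} (v : Fin 4 → α)
theorem comp_s01 : v ∘ s01 = ![v 1, v 0, v 2, v 3] := by funext t; fin_cases t <;> rfl
theorem comp_s23 : v ∘ s23 = ![v 0, v 1, v 3, v 2] := by funext t; fin_cases t <;> rfl
theorem comp_sw : v ∘ sw = ![v 2, v 3, v 0, v 1] := by funext t; fin_cases t <;> rfl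
theorem comp_s2 : v ∘ s2 = ![v 0, v 2, v 1, v 3] := by funext t; fin_cases t <;> rfl
theorem comp_s3 : v ∘ s3 = ![v 0, v 3, v 1, v 2] := by funext t; fin_cases t <;> rfl
theorem comp_s4 : v ∘ s4 = ![v 1, v 2, v 0, v 3] := by funext t; fin_cases t <;> rfl
theorem comp_s5 : v ∘ s5 = ![v 1, v 3, v 0, v 2] := by funext t; fin_cases t <;> rfl
end comps

theorem vec_apply {α : Type*} (a b c d : α) :
    (![a,b,c,d] 0 = a) ∧ (![a,b,c,d] 1 = b) ∧ (![a,b,c,d] 2 = c) ∧ (![a,b,c,d] 3 = d) :=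
  ⟨rfl, rfl, rfl, rfl⟩

theorem map_psi (n : ℕ) :
    (wedgeKernel22 (Fin n → ℝ)).map (psiEquiv n).toLinearMap = idxKernel n := by
  apply le_antisymm
  · rintro f ⟨T, hT, rfl⟩
    intro i j k l
    obtain ⟨h1, h2, h3, h4⟩ := hT (Pi.single i 1) (Pi.single j 1) (Pi.single k 1) (Pi.single l 1)
    have e : (psiEquiv n).toLinearMap T = psiL n T := rfl
    rw [e]
    rw [psi_vec, psi_vec, psi_vec, psi_vec, psi_vec, psi_vec, psi_vec, psi_vec]
    exact ⟨h1, h2, h3, h4⟩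
  · intro f hf
    refine ⟨phiL n f, ?_, psi_phi f⟩
    have hps : psiL n (phiL n f) = f := psi_phi f
    set T := phiL n f with hT
    have hv1 : ∀ v : Fin 4 → Fin n, psiL n T (v ∘ s01) = (-1) * psiL n T v := by
      intro v
      rw [hps, comp_s01]
      have := (hf (v 0) (v 1) (v 2) (v 3)).1
      rw [← eta4 v] at this; linarith
    have hv2 : ∀ v : Fin 4 → Fin n, psiL n T (v ∘ s23) = (-1) * psiL n T v := by
      intro v
      rw [hps, comp_s23]
      have := (hf (v 0) (v 1) (v 2) (v 3)).2.1
      rw [← eta4 v] at this; linarith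
    have hv3 : ∀ v : Fin 4 → Fin n, psiL n T (v ∘ sw) = (1:ℝ) * psiL n T v := by
      intro v
      rw [hps, comp_sw]
      have := (hf (v 0) (v 1) (v 2) (v 3)).2.2.1
      rw [← eta4 v] at this; linarith
    have hv4 : ∀ v : Fin 4 → Fin n, psiL n T v - psiL n T (v ∘ s2) + psiL n T (v ∘ s3)
        + psiL n T (v ∘ s4) - psiL n T (v ∘ s5) + psiL n T (v ∘ sw) = 0 := by
      intro v
      rw [hps, comp_s2, comp_s3, comp_s4, comp_s5, comp_sw]
      have := (hf (v 0) (v 1) (v 2) (v 3)).2.2.2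
      rw [← eta4 v] at this; linarith
    have c1 := cond_transfer T s01 (-1) hv1
    have c2 := cond_transfer T s23 (-1) hv2
    have c3 := cond_transfer T sw 1 hv3
    have c4 := bianchi_transfer T hv4
    intro x y z w
    have e1 := c1 ![x,y,z,w]
    have e2 := c2 ![x,y,z,w]
    have e3 := c3 ![x,y,z,w]
    have e4 := c4 ![x,y,z,w]
    rw [comp_s01] at e1
    rw [comp_s23] at e2
    rw [comp_sw] at e3
    rw [comp_s2, comp_s3, comp_s4, comp_s5, comp_sw] at e4
    simp only [Matrix.cons_val_zero, Matrix.cons_val_one, Matrix.head_cons,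
      Matrix.cons_val_two, Matrix.tail_cons, Matrix.cons_val_three] at e1 e2 e3 e4
    exact ⟨by linarith, by linarith, by linarith, by linarith⟩

/-- the "good" index tuples: a basis of the kernel -/
def Pgood {n : ℕ} (v : Fin 4 → Fin n) : Prop :=
  v 0 < v 1 ∧ v 2 < v 3 ∧ (v 0 < v 2 ∨ (v 0 = v 2 ∧ v 1 ≤ v 3)) ∧
    ¬(v 0 < v 2 ∧ v 2 < v 1 ∧ v 1 < v 3)

instance {n : ℕ} : DecidablePred (Pgood (n := n)) := fun v => by
  unfold Pgood; infer_instance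

theorem inj_zero (f : (Fin 4 → Fin n) → ℝ) (hf : f ∈ idxKernel n)
    (h0 : ∀ v, Pgood v → f v = 0) : f = 0 := by
  have A1 : ∀ i j k l : Fin n, f ![j,i,k,l] = -f ![i,j,k,l] := fun i j k l => (hf i j k l).1
  have A2 : ∀ i j k l : Fin n, f ![i,j,l,k] = -f ![i,j,k,l] := fun i j k l => (hf i j k l).2.1
  have A3 : ∀ i j k l : Fin n, f ![k,l,i,j] = f ![i,j,k,l] := fun i j k l => (hf i j k l).2.2.1
  have A4 : ∀ i j k l : Fin n, f ![i,k,j,l] = f ![i,j,k,l] + f ![i,l,j,k] := by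
    intro i j k l
    have hb := (hf i j k l).2.2.2
    have e1 : f ![i,l,j,k] = f ![j,k,i,l] := A3 j k i l
    have e2 : f ![i,k,j,l] = f ![j,l,i,k] := A3 j l i k
    have e3 : f ![k,l,i,j] = f ![i,j,k,l] := A3 i j k l
    linarith
  have hz : ∀ i j k l : Fin n, i < j → k < l → (i < k ∨ (i = k ∧ j ≤ l)) →
      ¬(i < k ∧ k < j ∧ j < l) → f ![i,j,k,l] = 0 := by
    intro i j k l h1 h2 h3 h4
    exact h0 ![i,j,k,l] ⟨h1, h2, h3, h4⟩
  have L3 : ∀ i j k l : Fin n, i < j → k < l → (i < k ∨ (i = k ∧ j ≤ l)) →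
      f ![i,j,k,l] = 0 := by
    intro i j k l h1 h2 h3
    by_cases hp : i < k ∧ k < j ∧ j < l
    · obtain ⟨p1, p2, p3⟩ := hp
      rw [A4 i k j l]
      have z1 : f ![i,k,j,l] = 0 := hz i k j l p1 p3 (Or.inl (p1.trans p2))
        (by rintro ⟨-, q2, -⟩; exact absurd q2 (not_lt.mpr p2.le))
      have z2 : f ![i,l,k,j] = 0 := hz i l k j (p1.trans (p2.trans p3)) p2 (Or.inl p1)
        (by rintro ⟨-, -, q3⟩; exact absurd q3 (not_lt.mpr p3.le))
      rw [z1, z2, add_zero]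
    · exact hz i j k l h1 h2 h3 hp
  have L2 : ∀ i j k l : Fin n, i < j → k < l → f ![i,j,k,l] = 0 := by
    intro i j k l h1 h2
    by_cases h3 : i < k ∨ (i = k ∧ j ≤ l)
    · exact L3 i j k l h1 h2 h3
    · push_neg at h3
      obtain ⟨h3a, h3b⟩ := h3
      rw [← A3 i j k l]
      rcases lt_or_eq_of_le h3a with h | h
      · exact L3 k l i j h2 h1 (Or.inl h)
      · exact L3 k l i j h2 h1 (Or.inr ⟨h, (h3b h.symm).le⟩)
  have L1a : ∀ i j k l : Fin n, i < j → f ![i,j,k,l] = 0 := by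
    intro i j k l h1
    rcases lt_trichotomy k l with h | h | h
    · exact L2 i j k l h1 h
    · subst h; have := A2 i j k k; linarith
    · have := A2 i j l k
      have := L2 i j l k h1 h
      linarith
  have L1 : ∀ i j k l : Fin n, f ![i,j,k,l] = 0 := by
    intro i j k l
    rcases lt_trichotomy i j with h | h | h
    · exact L1a i j k l h
    · subst h; have := A1 i i k l; linarith
    · have := A1 j i k l
      have := L1a j i k l h
      linarith
  funext v
  rw [eta4 v]
  exact L1 _ _ _ _

noncomputable section FfunSec
variable {n : ℕ}

def sgn (a b : Fin n) : ℝ := if a < b then 1 else -1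

def Hfun (g : (Fin 4 → Fin n) → ℝ) (i j k l : Fin n) : ℝ :=
  if i < k ∧ k < j ∧ j < l then g ![i,k,j,l] + g ![i,l,k,j] else g ![i,j,k,l]

def Gfun (g : (Fin 4 → Fin n) → ℝ) (i j k l : Fin n) : ℝ :=
  if i < k ∨ (i = k ∧ j ≤ l) then Hfun g i j k l else Hfun g k l i j

def Ffun (g : (Fin 4 → Fin n) → ℝ) (i j k l : Fin n) : ℝ :=
  if i = j ∨ k = l then 0
  else sgn i j * sgn k l * Gfun g (min i j) (max i j) (min k l) (max k l)

theorem sgn_swap {a b : Fin n} (h : a ≠ b) : sgn b a = -sgn a b := by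
  unfold sgn
  rcases lt_or_gt_of_ne h with h' | h'
  · rw [if_pos h', if_neg (asymm h')] <;> norm_num
  · rw [if_neg (asymm h'), if_pos h'] <;> norm_num

theorem Gsymm (g : (Fin 4 → Fin n) → ℝ) (i j k l : Fin n) :
    Gfun g k l i j = Gfun g i j k l := by
  unfold Gfun
  rcases lt_trichotomy i k with h | h | h
  · rw [if_neg (by push_neg; exact ⟨h.le, fun he => absurd he h.ne'⟩), if_pos (Or.inl h)]
  · subst h
    rcases lt_trichotomy j l with h' | h' | h'
    · rw [if_neg (by push_neg; exact ⟨le_refl i, fun _ => h'⟩),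
        if_pos (Or.inr ⟨rfl, h'.le⟩)]
    · subst h'; rfl
    · rw [if_pos (Or.inr ⟨rfl, h'.le⟩), if_neg (by push_neg; exact ⟨le_refl i, fun _ => h'⟩)]
  · rw [if_pos (Or.inl h), if_neg (by push_neg; exact ⟨h.le, fun he => absurd he h.ne'⟩)]

theorem F1 (g : (Fin 4 → Fin n) → ℝ) (i j k l : Fin n) :
    Ffun g j i k l = -Ffun g i j k l := by
  unfold Ffun
  by_cases hij : i = j
  · rw [if_pos (Or.inl hij.symm), if_pos (Or.inl hij)] <;> ring
  by_cases hkl : k = l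
  · rw [if_pos (Or.inr hkl), if_pos (Or.inr hkl)] <;> ring
  rw [if_neg (by push_neg; exact ⟨fun h => hij h.symm, hkl⟩),
    if_neg (by push_neg; exact ⟨hij, hkl⟩)]
  rw [sgn_swap hij, min_comm j i, max_comm j i]
  ring

theorem F2 (g : (Fin 4 → Fin n) → ℝ) (i j k l : Fin n) :
    Ffun g i j l k = -Ffun g i j k l := by
  unfold Ffun
  by_cases hij : i = j
  · rw [if_pos (Or.inl hij), if_pos (Or.inl hij)] <;> ring
  by_cases hkl : k = l
  · rw [if_pos (Or.inr hkl.symm), if_pos (Or.inr hkl)] <;> ring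
  rw [if_neg (by push_neg; exact ⟨hij, fun h => hkl h.symm⟩),
    if_neg (by push_neg; exact ⟨hij, hkl⟩)]
  rw [sgn_swap hkl, min_comm l k, max_comm l k]
  ring

theorem F3 (g : (Fin 4 → Fin n) → ℝ) (i j k l : Fin n) :
    Ffun g k l i j = Ffun g i j k l := by
  unfold Ffun
  by_cases hij : i = j
  · rw [if_pos (Or.inr hij), if_pos (Or.inl hij)]
  by_cases hkl : k = l
  · rw [if_pos (Or.inl hkl), if_pos (Or.inr hkl)]
  rw [if_neg (by push_neg; exact ⟨hkl, hij⟩), if_neg (by push_neg; exact ⟨hij, hkl⟩)]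
  rw [Gsymm]
  ring

theorem Ffun_sorted (g : (Fin 4 → Fin n) → ℝ) {i j k l : Fin n} (hij : i < j) (hkl : k < l)
    (hlex : i < k ∨ (i = k ∧ j ≤ l)) (hpat : ¬(i < k ∧ k < j ∧ j < l)) :
    Ffun g i j k l = g ![i,j,k,l] := by
  unfold Ffun
  rw [if_neg (by push_neg; exact ⟨ne_of_lt hij, ne_of_lt hkl⟩)]
  rw [min_eq_left hij.le, max_eq_right hij.le, min_eq_left hkl.le, max_eq_right hkl.le]
  unfold sgn
  rw [if_pos hij, if_pos hkl]
  unfold Gfun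
  rw [if_pos hlex]
  unfold Hfun
  rw [if_neg hpat]
  ring

theorem Ffun_sorted_pat (g : (Fin 4 → Fin n) → ℝ) {i j k l : Fin n} (hij : i < j) (hkl : k < l)
    (hlex : i < k ∨ (i = k ∧ j ≤ l)) (hpat : i < k ∧ k < j ∧ j < l) :
    Ffun g i j k l = g ![i,k,j,l] + g ![i,l,k,j] := by
  unfold Ffun
  rw [if_neg (by push_neg; exact ⟨ne_of_lt hij, ne_of_lt hkl⟩)]
  rw [min_eq_left hij.le, max_eq_right hij.le, min_eq_left hkl.le, max_eq_right hkl.le]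
  unfold sgn
  rw [if_pos hij, if_pos hkl]
  unfold Gfun
  rw [if_pos hlex]
  unfold Hfun
  rw [if_pos hpat]
  ring

theorem Fb_sorted (g : (Fin 4 → Fin n) → ℝ) {i j k l : Fin n}
    (h1 : i < j) (h2 : j < k) (h3 : k < l) :
    Ffun g i j k l - Ffun g i k j l + Ffun g i l j k + Ffun g j k i l
      - Ffun g j l i k + Ffun g k l i j = 0 := by
  have v1 : Ffun g i j k l = g ![i,j,k,l] :=
    Ffun_sorted g h1 h3 (Or.inl (h1.trans h2))
      (by rintro ⟨-, q2, -⟩; exact absurd q2 (asymm h2))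
  have v2 : Ffun g i k j l = g ![i,j,k,l] + g ![i,l,j,k] :=
    Ffun_sorted_pat g (h1.trans h2) (h2.trans h3) (Or.inl h1) ⟨h1, h2, h3⟩
  have v3 : Ffun g i l j k = g ![i,l,j,k] :=
    Ffun_sorted g (h1.trans (h2.trans h3)) h2 (Or.inl h1)
      (by rintro ⟨-, -, q3⟩; exact absurd q3 (asymm h3))
  have v4 : Ffun g j k i l = g ![i,l,j,k] := by rw [F3]; exact v3
  have v5 : Ffun g j l i k = g ![i,j,k,l] + g ![i,l,j,k] := by rw [F3]; exact v2
  have v6 : Ffun g k l i j = g ![i,j,k,l] := by rw [F3]; exact v1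
  rw [v1, v2, v3, v4, v5, v6]; ring

theorem alt_vanish {α : Type*} [LinearOrder α] (b : α → α → α → α → ℝ)
    (h01 : ∀ x y z w, b y x z w = -b x y z w)
    (h12 : ∀ x y z w, b x z y w = -b x y z w)
    (h23 : ∀ x y z w, b x y w z = -b x y z w)
    (hs : ∀ x y z w, x < y → y < z → z < w → b x y z w = 0) :
    ∀ x y z w, b x y z w = 0 := by
  have e01 : ∀ x z w, b x x z w = 0 := fun x z w => by have := h01 x x z w; linarith
  have e12 : ∀ x y w, b x y y w = 0 := fun x y w => by have := h12 x y y w; linarith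
  have e23 : ∀ x y z, b x y z z = 0 := fun x y z => by have := h23 x y z z; linarith
  have A3 : ∀ x y z w, x ≤ y → y ≤ z → z ≤ w → b x y z w = 0 := by
    intro x y z w h1 h2 h3
    rcases h1.lt_or_eq with h1' | rfl
    · rcases h2.lt_or_eq with h2' | rfl
      · rcases h3.lt_or_eq with h3' | rfl
        · exact hs _ _ _ _ h1' h2' h3'
        · exact e23 _ _ _
      · exact e12 _ _ _
    · exact e01 _ _ _
  have A2 : ∀ x y z w, x ≤ y → y ≤ z → b x y z w = 0 := by
    intro x y z w h1 h2
    rcases le_or_gt z w with h3 | h3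
    · exact A3 _ _ _ _ h1 h2 h3
    rcases le_or_gt y w with h4 | h4
    · have t1 := h23 x y w z
      have z0 := A3 x y w z h1 h4 h3.le
      linarith
    rcases le_or_gt x w with h5 | h5
    · have t1 := h23 x y w z
      have t2 := h12 x w y z
      have z0 := A3 x w y z h5 h4.le h2
      linarith
    · have t1 := h23 x y w z
      have t2 := h12 x w y z
      have t3 := h01 w x y z
      have z0 := A3 w x y z h5.le h1 h2
      linarith
  have A1 : ∀ x y z w, x ≤ y → b x y z w = 0 := by
    intro x y z w h1
    rcases le_or_gt y z with h2 | h2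
    · exact A2 _ _ _ _ h1 h2
    rcases le_or_gt x z with h3 | h3
    · have t1 := h12 x z y w
      have z0 := A2 x z y w h3 h2.le
      linarith
    · have t1 := h12 x z y w
      have t2 := h01 z x y w
      have z0 := A2 z x y w h3.le h1
      linarith
  intro x y z w
  rcases le_or_gt x y with h | h
  · exact A1 _ _ _ _ h
  · have t := h01 y x z w
    have := A1 y x z w h.le
    linarith

theorem Fb_all (g : (Fin 4 → Fin n) → ℝ) :
    ∀ x y z w : Fin n, Ffun g x y z w - Ffun g x z y w + Ffun g x w y z + Ffun g y z x w
      - Ffun g y w x z + Ffun g z w x y = 0 := by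
  set b : Fin n → Fin n → Fin n → Fin n → ℝ := fun x y z w =>
    Ffun g x y z w - Ffun g x z y w + Ffun g x w y z + Ffun g y z x w
      - Ffun g y w x z + Ffun g z w x y with hb
  have h01 : ∀ x y z w, b y x z w = -b x y z w := by
    intro x y z w
    simp only [hb]
    have t1 := F1 g x y z w
    have t2 := F2 g z w x y
    linarith
  have h12 : ∀ x y z w, b x z y w = -b x y z w := by
    intro x y z w
    simp only [hb]
    have t1 := F2 g x w y z
    have t2 := F1 g y z x w
    linarith
  have h23 : ∀ x y z w, b x y w z = -b x y z w := by
    intro x y z w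
    simp only [hb]
    have t1 := F2 g x y z w
    have t2 := F1 g z w x y
    linarith
  have hs : ∀ x y z w : Fin n, x < y → y < z → z < w → b x y z w = 0 := by
    intro x y z w l1 l2 l3
    simp only [hb]
    exact Fb_sorted g l1 l2 l3
  exact alt_vanish b h01 h12 h23 hs

def Fv (g : (Fin 4 → Fin n) → ℝ) : (Fin 4 → Fin n) → ℝ :=
  fun v => Ffun g (v 0) (v 1) (v 2) (v 3)

theorem Fv_mem (g : (Fin 4 → Fin n) → ℝ) : Fv g ∈ idxKernel n := by
  intro i j k l
  refine ⟨F1 g i j k l, F2 g i j k l, F3 g i j k l, ?_⟩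
  have := Fb_all g i j k l
  show Ffun g i j k l - Ffun g i k j l + Ffun g i l j k + Ffun g j k i l
      - Ffun g j l i k + Ffun g k l i j = 0
  linarith

end FfunSec

noncomputable def resL (n : ℕ) :
    (idxKernel n) →ₗ[ℝ] ({v : Fin 4 → Fin n // Pgood v} → ℝ) where
  toFun f := fun b => (f : (Fin 4 → Fin n) → ℝ) b.1
  map_add' f g := rfl
  map_smul' c f := rfl

theorem resL_injective (n : ℕ) : Function.Injective (resL n) := by
  rw [← LinearMap.ker_eq_bot]
  ext f
  simp only [LinearMap.mem_ker, Submodule.mem_bot]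
  constructor
  · intro h
    apply Subtype.ext
    refine inj_zero f.1 f.2 fun v hv => ?_
    exact congrFun h ⟨v, hv⟩
  · rintro rfl; rfl

theorem resL_surjective (n : ℕ) : Function.Surjective (resL n) := by
  intro gg
  set g' : (Fin 4 → Fin n) → ℝ := fun v => if h : Pgood v then gg ⟨v, h⟩ else 0 with hg'
  refine ⟨⟨Fv g', Fv_mem g'⟩, ?_⟩
  funext b
  obtain ⟨v, hv⟩ := b
  obtain ⟨h1, h2, h3, h4⟩ := hv
  show Ffun g' (v 0) (v 1) (v 2) (v 3) = gg ⟨v, _⟩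
  rw [Ffun_sorted g' h1 h2 h3 h4, ← eta4 v, hg']
  exact dif_pos ⟨h1, h2, h3, h4⟩

noncomputable def idxEquiv (n : ℕ) :
    (idxKernel n) ≃ₗ[ℝ] ({v : Fin 4 → Fin n // Pgood v} → ℝ) :=
  LinearEquiv.ofBijective (resL n) ⟨resL_injective n, resL_surjective n⟩

theorem finrank_eq_card_good (n : ℕ) :
    Module.finrank ℝ (wedgeKernel22 (Fin n → ℝ))
      = Fintype.card {v : Fin 4 → Fin n // Pgood v} := by
  have e1 := ((psiEquiv n).submoduleMap (wedgeKernel22 (Fin n → ℝ))).finrank_eq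
  rw [map_psi n] at e1
  rw [e1, (idxEquiv n).finrank_eq, Module.finrank_fintype_fun_eq_card]

section Counting
open Finset
variable {n : ℕ}

def Qp (v : Fin 4 → Fin n) : Prop :=
  v 0 < v 1 ∧ v 2 < v 3 ∧ (v 0 < v 2 ∨ (v 0 = v 2 ∧ v 1 ≤ v 3))

def Patp (v : Fin 4 → Fin n) : Prop := v 0 < v 2 ∧ v 2 < v 1 ∧ v 1 < v 3

instance : DecidablePred (Qp (n := n)) := fun v => by unfold Qp; infer_instance
instance : DecidablePred (Patp (n := n)) := fun v => by unfold Patp; infer_instance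

theorem card_partition (n : ℕ) :
    Fintype.card {v : Fin 4 → Fin n // Pgood v} + Fintype.card {v : Fin 4 → Fin n // Patp v}
      = Fintype.card {v : Fin 4 → Fin n // Qp v} := by
  rw [Fintype.card_subtype, Fintype.card_subtype, Fintype.card_subtype]
  have h := Finset.card_filter_add_card_filter_not
    (s := Finset.univ.filter (fun v => Qp (n := n) v)) (p := fun v => Patp (n := n) v)
  rw [Finset.filter_filter, Finset.filter_filter] at h
  have e1 : Finset.univ.filter (fun v => Qp (n := n) v ∧ Patp (n := n) v)
      = Finset.univ.filter (fun v => Patp (n := n) v) := by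
    ext v
    simp only [Finset.mem_filter, Finset.mem_univ, true_and]
    constructor
    · exact fun h => h.2
    · intro h
      exact ⟨⟨h.1.trans h.2.1, h.2.1.trans h.2.2, Or.inl h.1⟩, h⟩
  have e2 : Finset.univ.filter (fun v => Qp (n := n) v ∧ ¬Patp (n := n) v)
      = Finset.univ.filter (fun v => Pgood (n := n) v) := by
    ext v
    simp only [Finset.mem_filter, Finset.mem_univ, true_and]
    unfold Qp Patp Pgood
    tauto
  rw [e1, e2] at h
  omega

/-- strictly monotone tuples correspond to finsets -/
def strictMonoEquiv (k n : ℕ) :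
    {w : Fin k → Fin n // StrictMono w} ≃ {s : Finset (Fin n) // s.card = k} where
  toFun w := ⟨Finset.univ.image w.1, by
    rw [Finset.card_image_of_injective _ w.2.injective, Finset.card_univ, Fintype.card_fin]⟩
  invFun s := ⟨(s.1.orderEmbOfFin s.2 : Fin k → Fin n), (s.1.orderEmbOfFin s.2).strictMono⟩
  left_inv := by
    rintro ⟨w, hw⟩
    apply Subtype.ext
    exact (Finset.orderEmbOfFin_unique _
      (fun x => Finset.mem_image_of_mem _ (Finset.mem_univ x)) hw).symm
  right_inv := by
    rintro ⟨s, hs⟩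
    apply Subtype.ext
    show Finset.univ.image (s.orderEmbOfFin hs) = s
    apply Finset.eq_of_subset_of_card_le
    · intro x hx
      obtain ⟨i, -, rfl⟩ := Finset.mem_image.mp hx
      exact s.orderEmbOfFin_mem hs i
    · rw [Finset.card_image_of_injective _ (s.orderEmbOfFin hs).injective,
        Finset.card_univ, Fintype.card_fin, hs]

theorem card_strictMono (k n : ℕ) :
    Fintype.card {w : Fin k → Fin n // StrictMono w} = n.choose k := by
  rw [Fintype.card_congr (strictMonoEquiv k n), Fintype.card_finset_len, Fintype.card_fin]

def patEquiv (n : ℕ) :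
    {v : Fin 4 → Fin n // Patp v} ≃ {w : Fin 4 → Fin n // StrictMono w} where
  toFun v := ⟨v.1 ∘ ![0,2,1,3], by
    rw [Fin.strictMono_iff_lt_succ]
    intro i
    fin_cases i
    · exact v.2.1
    · exact v.2.2.1
    · exact v.2.2.2⟩
  invFun w := ⟨w.1 ∘ ![0,2,1,3],
    w.2 (show (0:Fin 4) < 1 by decide),
    w.2 (show (1:Fin 4) < 2 by decide),
    w.2 (show (2:Fin 4) < 3 by decide)⟩
  left_inv v := Subtype.ext (by funext t; fin_cases t <;> rfl)
  right_inv w := Subtype.ext (by funext t; fin_cases t <;> rfl)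

theorem card_pat (n : ℕ) :
    Fintype.card {v : Fin 4 → Fin n // Patp v} = n.choose 4 := by
  rw [Fintype.card_congr (patEquiv n), card_strictMono 4 n]

abbrev PairT (n : ℕ) := {q : Lex (Fin n × Fin n) // (ofLex q).1 < (ofLex q).2}

def pairTEquiv (n : ℕ) : PairT n ≃ {w : Fin 2 → Fin n // StrictMono w} where
  toFun q := ⟨![(ofLex q.1).1, (ofLex q.1).2], by
    rw [Fin.strictMono_iff_lt_succ]
    intro i
    fin_cases i
    · exact q.2⟩
  invFun w := ⟨toLex (w.1 0, w.1 1), w.2 (show (0:Fin 2) < 1 by decide)⟩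
  left_inv q := Subtype.ext rfl
  right_inv w := Subtype.ext (by funext t; fin_cases t <;> rfl)

theorem card_pairT (n : ℕ) : Fintype.card (PairT n) = n.choose 2 := by
  rw [Fintype.card_congr (pairTEquiv n), card_strictMono 2 n]

def qEquiv (n : ℕ) :
    {v : Fin 4 → Fin n // Qp v} ≃ {p : PairT n × PairT n // p.1 ≤ p.2} where
  toFun v := ⟨(⟨toLex (v.1 0, v.1 1), v.2.1⟩, ⟨toLex (v.1 2, v.1 3), v.2.2.1⟩), by
    show toLex (v.1 0, v.1 1) ≤ toLex (v.1 2, v.1 3)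
    rw [Prod.Lex.le_iff]
    exact v.2.2.2⟩
  invFun p := ⟨![(ofLex p.1.1.1).1, (ofLex p.1.1.1).2, (ofLex p.1.2.1).1, (ofLex p.1.2.1).2],
    p.1.1.2, p.1.2.2, by
      have h := p.2
      rw [← Subtype.coe_le_coe] at h
      exact Prod.Lex.le_iff.mp h⟩
  left_inv v := Subtype.ext (by funext t; fin_cases t <;> rfl)
  right_inv p := Subtype.ext (by
    apply Prod.ext <;> exact Subtype.ext rfl)

theorem card_q (n : ℕ) :
    Fintype.card {v : Fin 4 → Fin n // Qp v} = (n.choose 2 + 1).choose 2 := by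
  rw [Fintype.card_congr ((qEquiv n).trans (Sym2.sortEquiv (α := PairT n)).symm),
    Sym2.card, card_pairT]

end Counting

theorem choose2_mul (M : ℕ) : 2 * M.choose 2 = (M - 1) * M := by
  have h := Nat.descFactorial_eq_factorial_mul_choose M 2
  simp [Nat.descFactorial] at h
  omega

theorem choose4_mul (M : ℕ) : 24 * M.choose 4 = (M - 3) * ((M - 2) * ((M - 1) * M)) := by
  have h := Nat.descFactorial_eq_factorial_mul_choose M 4
  simp [Nat.descFactorial, Nat.factorial] at h
  omega

theorem key_arith (n : ℕ) :
    n ^ 2 * (n + 1) * (n - 1) + 12 * n.choose 4 = 12 * ((n.choose 2 + 1).choose 2) := by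
  match n with
  | 0 => decide
  | 1 => decide
  | 2 => decide
  | 3 => decide
  | (m + 4) =>
    set N := (m + 4).choose 2 with hNdef
    set c4 := (m + 4).choose 4 with hc4def
    set C2 := (N + 1).choose 2 with hC2def
    have hN : 2 * N = (m + 3) * (m + 4) := by
      rw [hNdef, choose2_mul]
      norm_num
    have hC2 : 2 * C2 = N * (N + 1) := by
      rw [hC2def, choose2_mul]
      norm_num
    have hc4 : 24 * c4 = (m + 1) * ((m + 2) * ((m + 3) * (m + 4))) := by
      rw [hc4def, choose4_mul]
      have e1 : m + 4 - 3 = m + 1 := by omega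
      have e2 : m + 4 - 2 = m + 2 := by omega
      rw [e1, e2]
      norm_num
    have doubled : 2 * ((m + 4) ^ 2 * ((m + 4) + 1) * ((m + 4) - 1)) + 24 * c4 = 24 * C2 := by
      have hsub : (m + 4) - 1 = m + 3 := rfl
      rw [hsub]
      zify at hN hC2 hc4 ⊢
      linear_combination hc4 - 12 * hC2 - (6 * (N : ℤ) + 3 * ((m + 3) * (m + 4)) + 6) * hN
    omega

theorem finrank_wedgeKernel22' (n : ℕ) :
    Module.finrank ℝ (wedgeKernel22 (Fin n → ℝ)) = n ^ 2 * (n + 1) * (n - 1) / 12 := by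
  rw [finrank_eq_card_good]
  have hpart := card_partition n
  rw [card_pat, card_q] at hpart
  have key := key_arith n
  generalize hA : n ^ 2 * (n + 1) * (n - 1) = A at key ⊢
  omega

/-- dim Λ^{2,2}_0(ℝⁿ) = (1/12)·n²(n+1)(n−1). -/
theorem finrank_wedgeKernel22 (n : ℕ) :
    Module.finrank ℝ (wedgeKernel22 (Fin n → ℝ)) = n ^ 2 * (n + 1) * (n - 1) / 12 := by
  exact finrank_wedgeKernel22' n
end

section
/- Counting identity for bubble space dimensions: for a face of dimension m and polynomial degree r, the number of basis elements λ^α ψ with |α| = r, ψ ∈ {β, γ forms on the face}, whose combined index set equals all m+1 vertices, is C(m+1,3)·C(r+2,m) + 2·C(m+1,4)·C(r+3,m); in particular this count is zero when r < m−3. -/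
open Finset

lemma card_piAntidiag_univ_fin (n k : ℕ) :
    (Finset.piAntidiag (Finset.univ : Finset (Fin n)) k).card = (n + k - 1).choose k := by
  classical
  rw [← Finset.map_sym_eq_piAntidiag, Finset.card_map, Finset.sym_univ,
    Finset.card_univ, Sym.card_sym_eq_choose, Fintype.card_fin]

lemma card_filter_support (m r c : ℕ) (S : Finset (Fin (m + 1))) (hS : S.card = c + 1) :
    ((Finset.piAntidiag (Finset.univ : Finset (Fin (m + 1))) r).filter
      (fun α => ∀ i, i ∈ S ∨ α i ≠ 0)).card = (r + c).choose m := by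
  classical
  have hc1 : c + 1 ≤ m + 1 := by
    have := Finset.card_le_univ S
    simpa [hS] using this
  have hcompl : Sᶜ.card = m - c := by
    rw [Finset.card_compl, hS, Fintype.card_fin]
    omega
  have hind : (∑ i : Fin (m + 1), if i ∈ S then 0 else 1) = m - c := by
    rw [Finset.sum_ite, Finset.sum_const_zero, Finset.sum_const, smul_eq_mul, mul_one, zero_add]
    rw [← hcompl]
    congr 1
    ext i
    simp
  by_cases h : m ≤ r + c
  · have hd : m - c ≤ r := by omega
    have hbij :
        ((Finset.piAntidiag (Finset.univ : Finset (Fin (m + 1))) r).filter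
          (fun α => ∀ i, i ∈ S ∨ α i ≠ 0)).card
          = (Finset.piAntidiag (Finset.univ : Finset (Fin (m + 1))) (r - (m - c))).card := by
      apply Finset.card_nbij' (i := fun α i => α i - if i ∈ S then 0 else 1)
        (j := fun β i => β i + if i ∈ S then 0 else 1)
      · intro α hα
        simp only [Finset.mem_coe, Finset.mem_filter, Finset.mem_piAntidiag] at hα
        obtain ⟨⟨hsum, -⟩, hsupp⟩ := hα
        have hsum' : (∑ i, α i) = r := hsum
        have hpt : ∀ i, (if i ∈ S then 0 else 1) ≤ α i := by
          intro i
          by_cases hi : i ∈ S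
          · simp [hi]
          · rcases hsupp i with h' | h'
            · exact absurd h' hi
            · simp only [hi, if_neg, if_false]
              omega
        have hsum2 : (∑ i, (α i - if i ∈ S then 0 else 1)) +
            (∑ i : Fin (m + 1), if i ∈ S then 0 else 1) = ∑ i, α i := by
          rw [← Finset.sum_add_distrib]
          exact Finset.sum_congr rfl fun i _ => Nat.sub_add_cancel (hpt i)
        simp only [Finset.mem_coe, Finset.mem_piAntidiag]
        refine ⟨?_, fun i _ => Finset.mem_univ i⟩
        show (∑ i, (α i - if i ∈ S then 0 else 1)) = r - (m - c)
        omega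
      · intro β hβ
        simp only [Finset.mem_coe, Finset.mem_piAntidiag] at hβ
        obtain ⟨hsum, -⟩ := hβ
        have hsum' : (∑ i, β i) = r - (m - c) := hsum
        simp only [Finset.mem_coe, Finset.mem_filter, Finset.mem_piAntidiag]
        refine ⟨⟨?_, fun i _ => Finset.mem_univ i⟩, ?_⟩
        · show (∑ i, (β i + if i ∈ S then 0 else 1)) = r
          rw [Finset.sum_add_distrib, hsum', hind]
          omega
        · intro i
          by_cases hi : i ∈ S
          · exact Or.inl hi
          · right
            show β i + (if i ∈ S then 0 else 1) ≠ 0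
            simp [hi]
      · intro α hα
        simp only [Finset.mem_coe, Finset.mem_filter, Finset.mem_piAntidiag] at hα
        obtain ⟨-, hsupp⟩ := hα
        funext i
        show α i - (if i ∈ S then 0 else 1) + (if i ∈ S then 0 else 1) = α i
        by_cases hi : i ∈ S
        · simp [hi]
        · rcases hsupp i with h' | h'
          · exact absurd h' hi
          · simp only [hi, if_neg, if_false]
            omega
      · intro β _
        funext i
        by_cases hi : i ∈ S <;> simp [hi]
    have e1 : m + 1 + (r - (m - c)) - 1 = r + c := by clear hbij hind hcompl hS; omega
    have e2 : r - (m - c) = r + c - m := by clear hbij hind hcompl hS e1; omega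
    rw [hbij, card_piAntidiag_univ_fin, e1, e2, Nat.choose_symm h]
  · rw [Nat.choose_eq_zero_of_lt (by omega), Finset.card_eq_zero,
      Finset.filter_eq_empty_iff]
    intro α hα hsupp
    simp only [Finset.mem_piAntidiag] at hα
    obtain ⟨hsum, -⟩ := hα
    have hsum' : (∑ i, α i) = r := hsum
    have h1 : Sᶜ.card • 1 ≤ ∑ i ∈ Sᶜ, α i := by
      apply Finset.card_nsmul_le_sum
      intro i hi
      rcases hsupp i with h' | h'
      · exact absurd h' (Finset.mem_compl.mp hi)
      · omega
    have h2 : (∑ i ∈ Sᶜ, α i) ≤ ∑ i, α i :=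
      Finset.sum_le_sum_of_subset (Finset.subset_univ _)
    simp only [smul_eq_mul, mul_one] at h1
    omega

/-- The bubble-space basis data on an m-dimensional face for polynomial degree r: a monomial
multi-index α of degree r in the m+1 barycentric variables, together with a shape function ψ —
either the β-form of a 3-element vertex subset (one per subset, tagged `false`) or one of the
two γ-forms of a 4-element vertex subset (two per subset, tagged by a `Bool`) — such that the
combined index set supp(α) ∪ I(ψ) is the full vertex set. -/
def BubbleBasisData (m r : ℕ) : Type :=
  {p : (Fin (m + 1) → ℕ) × Finset (Fin (m + 1)) × Bool //
    (∑ i, p.1 i) = r ∧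
    ((p.2.1.card = 3 ∧ p.2.2 = false) ∨ p.2.1.card = 4) ∧
    (∀ i, i ∈ p.2.1 ∨ p.1 i ≠ 0)}

/-- the number of such basis elements is
C(m+1,3)·C(r+2,m) + 2·C(m+1,4)·C(r+3,m); in particular it is zero when r < m−3. -/
theorem card_bubble_basis (m r : ℕ) :
    Nat.card (BubbleBasisData m r) =
      Nat.choose (m + 1) 3 * Nat.choose (r + 2) m
        + 2 * (Nat.choose (m + 1) 4 * Nat.choose (r + 3) m) ∧
    (r + 3 < m → Nat.card (BubbleBasisData m r) = 0) := by
  classical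
  set B : Finset ((Fin (m + 1) → ℕ) × Finset (Fin (m + 1)) × Bool) :=
    ((Finset.piAntidiag (Finset.univ : Finset (Fin (m + 1))) r) ×ˢ
        (Finset.univ ×ˢ Finset.univ)).filter
      (fun p => ((p.2.1.card = 3 ∧ p.2.2 = false) ∨ p.2.1.card = 4) ∧
        ∀ i, i ∈ p.2.1 ∨ p.1 i ≠ 0) with hB
  have hmem : ∀ p : (Fin (m + 1) → ℕ) × Finset (Fin (m + 1)) × Bool,
      ((∑ i, p.1 i) = r ∧
        ((p.2.1.card = 3 ∧ p.2.2 = false) ∨ p.2.1.card = 4) ∧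
        (∀ i, i ∈ p.2.1 ∨ p.1 i ≠ 0)) ↔ p ∈ B := by
    intro p
    rw [hB, Finset.mem_filter, Finset.mem_product, Finset.mem_product, Finset.mem_piAntidiag]
    constructor
    · rintro ⟨h1, h2, h3⟩
      exact ⟨⟨⟨h1, fun i _ => Finset.mem_univ i⟩, Finset.mem_univ _, Finset.mem_univ _⟩, h2, h3⟩
    · rintro ⟨⟨⟨h1, -⟩, -⟩, h2, h3⟩
      exact ⟨h1, h2, h3⟩
  have hcard : Nat.card (BubbleBasisData m r) = B.card := by
    have e : BubbleBasisData m r ≃ {p // p ∈ B} := Equiv.subtypeEquivRight hmem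
    rw [Nat.card_congr e]
    exact Nat.card_eq_finsetCard B
  have hfib : B.card = ∑ q ∈ (Finset.univ ×ˢ Finset.univ :
      Finset (Finset (Fin (m + 1)) × Bool)),
      (B.filter fun p => p.2 = q).card :=
    Finset.card_eq_sum_card_fiberwise (fun p _ => by
      simp [Finset.mem_product])
  have hfibcard : ∀ q : Finset (Fin (m + 1)) × Bool,
      (B.filter fun p => p.2 = q).card =
        if ((q.1.card = 3 ∧ q.2 = false) ∨ q.1.card = 4) then
          ((Finset.piAntidiag (Finset.univ : Finset (Fin (m + 1))) r).filter
            (fun α => ∀ i, i ∈ q.1 ∨ α i ≠ 0)).card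
        else 0 := by
    intro q
    split_ifs with hq
    · apply Finset.card_nbij' (i := Prod.fst) (j := fun α => (α, q))
      · intro p hp
        rw [Finset.mem_coe, Finset.mem_filter] at hp
        obtain ⟨hpB, hpq⟩ := hp
        rw [← hmem] at hpB
        obtain ⟨h1, -, h3⟩ := hpB
        rw [hpq] at h3
        rw [Finset.mem_coe, Finset.mem_filter, Finset.mem_piAntidiag]
        exact ⟨⟨h1, fun i _ => Finset.mem_univ i⟩, h3⟩
      · intro α hα
        rw [Finset.mem_coe, Finset.mem_filter, Finset.mem_piAntidiag] at hα
        obtain ⟨⟨h1, -⟩, h3⟩ := hα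
        rw [Finset.mem_coe, Finset.mem_filter]
        exact ⟨(hmem (α, q)).mp ⟨h1, hq, h3⟩, rfl⟩
      · intro p hp
        rw [Finset.mem_coe, Finset.mem_filter] at hp
        rw [← hp.2]
      · intro α _
        rfl
    · rw [Finset.card_eq_zero, Finset.filter_eq_empty_iff]
      intro p hp hpq
      rw [← hmem] at hp
      exact hq (hpq ▸ hp.2.1)
  have key : Nat.card (BubbleBasisData m r) =
      Nat.choose (m + 1) 3 * Nat.choose (r + 2) m
        + 2 * (Nat.choose (m + 1) 4 * Nat.choose (r + 3) m) := by
    rw [hcard, hfib]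
    rw [Finset.sum_congr rfl (fun q _ => hfibcard q)]
    rw [Finset.sum_product]
    have hswap : ∀ S : Finset (Fin (m + 1)),
        (∑ b : Bool, if ((S.card = 3 ∧ b = false) ∨ S.card = 4) then
          ((Finset.piAntidiag (Finset.univ : Finset (Fin (m + 1))) r).filter
            (fun α => ∀ i, i ∈ S ∨ α i ≠ 0)).card else 0) =
        (if S.card = 3 then Nat.choose (r + 2) m else 0)
          + 2 * (if S.card = 4 then Nat.choose (r + 3) m else 0) := by
      intro S
      rw [Fintype.sum_bool]
      by_cases h3 : S.card = 3
      · have h4 : ¬ S.card = 4 := by omega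
        have hc := card_filter_support m r 2 S (by omega)
        rw [if_neg (by simp [h3, h4]), if_pos (Or.inl ⟨h3, rfl⟩), if_pos h3, if_neg h4, hc]
        simp
      · by_cases h4 : S.card = 4
        · have hc := card_filter_support m r 3 S (by omega)
          rw [if_pos (Or.inr h4), if_pos (Or.inr h4), if_neg h3, if_pos h4, hc]
          simp [two_mul]
        · rw [if_neg (by simp [h3, h4]), if_neg (by simp [h3, h4]), if_neg h3, if_neg h4]
    rw [Finset.sum_congr rfl (fun S _ => hswap S)]
    rw [Finset.sum_add_distrib, ← Finset.mul_sum]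
    have hcount : ∀ k : ℕ, ∀ v : ℕ,
        (∑ S : Finset (Fin (m + 1)), if S.card = k then v else 0)
          = Nat.choose (m + 1) k * v := by
      intro k v
      rw [← Finset.sum_filter, Finset.sum_const, smul_eq_mul,
        show (Finset.univ.filter fun S : Finset (Fin (m + 1)) => S.card = k)
            = Finset.powersetCard k Finset.univ by
          ext S; simp [Finset.mem_powersetCard, Finset.subset_univ],
        Finset.card_powersetCard, Finset.card_univ, Fintype.card_fin]
    rw [hcount 3 (Nat.choose (r + 2) m), hcount 4 (Nat.choose (r + 3) m)]
  refine ⟨key, fun h => ?_⟩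
  rw [key, Nat.choose_eq_zero_of_lt (show r + 2 < m by omega),
    Nat.choose_eq_zero_of_lt (show r + 3 < m by omega)]
  simp
end
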